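/- Let E be the real symmetric matrix with rows ((2,−1,0),(−1,2,0),(0,0,1)) (a matrix in the interior of the cone σ_{K₃+1} spanned by the quadratic forms x₁², x₂², (x₁−x₂)², x₃²). Fix a complex symmetric 3×3 matrix R and set τ(y) := iyE + R; then τ(y) ∈ ℍ₃ for all sufficiently large y > 0. Set S₁ := e^{2πiR₁₃} and S₂ := e^{2πiR₂₃}. Then the limit lim_{y→∞} e^{16πy} · θ_null(τ(y)) exists, and it equals zero if and only if (S₁ − 1)(S₂ − 1)(S₁S₂ − 1) = 0. -/

import Mathlib

open Complex Matrix

/-- The genus-`g` theta function with characteristic `[ε; δ]`. -/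
noncomputable def theta (g : ℕ) (ε δ : Fin g → ℤ) (τ : Matrix (Fin g) (Fin g) ℂ)
    (z : Fin g → ℂ) : ℂ :=
  ∑' N : Fin g → ℤ,
    Complex.exp (↑Real.pi * I *
        (∑ j, ∑ k, ((N j : ℂ) + (ε j : ℂ) / 2) * τ j k * ((N k : ℂ) + (ε k : ℂ) / 2)) +
      2 * ↑Real.pi * I *
        (∑ j, ((N j : ℂ) + (ε j : ℂ) / 2) * (z j + (δ j : ℂ) / 2)))

/-- Membership in the Siegel upper half-space. -/
def SiegelUpper (g : ℕ) (τ : Matrix (Fin g) (Fin g) ℂ) : Prop :=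
  τ.IsSymm ∧ (Matrix.of fun j k => (τ j k).im : Matrix (Fin g) (Fin g) ℝ).PosDef

/-- The genus-3 theta-null: the product of all theta constants with even characteristic. -/
noncomputable def thetaNull3 (τ : Matrix (Fin 3) (Fin 3) ℂ) : ℂ :=
  ∏ c ∈ Finset.univ.filter
      (fun c : (Fin 3 → Fin 2) × (Fin 3 → Fin 2) =>
        (∑ j, (c.1 j).val * (c.2 j).val) % 2 = 0),
    theta 3 (fun j => ((c.1 j).val : ℤ)) (fun j => ((c.2 j).val : ℤ)) τ 0

/-- The matrix generating the interior of the cone `σ_{K₃+1}`. -/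
noncomputable def EK31 : Matrix (Fin 3) (Fin 3) ℂ := !![2, -1, 0; -1, 2, 0; 0, 0, 1]

/-!
Along `τ(y) = i y E + R` the summand of `θ[ε;δ](τ(y))` at `v = N + ε/2` is `exp (-π y vᵀEv)` times
the phase `exp (π i (vᵀRv + v·δ))`. If `m` is the minimum of `vᵀEv` on `ℤ³ + ε/2`, dominated
convergence shows that `exp (π m y) θ[ε;δ](τ(y))` tends to the sum of the phases over the minimal
vectors.
For this `E` the minimum is attained at `v = ε/2`, and these minima add up to `16` over the 36 even
characteristics, which is the normalisation `e^{16πy}`.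

For an even characteristic the phases of `v` and `-v` agree. So a limit is a nonzero multiple of a
single phase unless `ε = (ε', 1)` with `ε' ≠ 0`; then there are two pairs `±(ε'/2, ±1/2)`, whose
phases differ by the factor `exp (π i (ε'₁ R₁₃ + ε'₂ R₂₃ + δ₃))`, and the limit vanishes iff this
factor is `-1`. As `δ₃` may be chosen freely, some limit vanishes iff
`exp (2π i (ε'₁ R₁₃ + ε'₂ R₂₃)) = 1` for some `ε' ≠ 0`, i.e. iff `S₁`, `S₂` or `S₁ S₂` is `1`.
-/

open Filter Topology
open scoped Real

lemma summable_pi_prod_of_nonneg {ι κ : Type*} [Fintype ι] {f : ι → κ → ℝ}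
    (hf₀ : ∀ i k, 0 ≤ f i k) (hf : ∀ i, Summable (f i)) :
    Summable fun x : ι → κ => ∏ i, f i (x i) := by
  classical
  refine summable_of_sum_le (c := ∏ i, ∑' k, f i k)
    (fun x => Finset.prod_nonneg fun i _ => hf₀ i (x i)) fun T => ?_
  calc ∑ x ∈ T, ∏ i, f i (x i)
      ≤ ∑ x ∈ Fintype.piFinset fun i => T.image (· i), ∏ i, f i (x i) :=
        Finset.sum_le_sum_of_subset_of_nonneg
          (fun x hx => Fintype.mem_piFinset.2 fun i => Finset.mem_image_of_mem _ hx)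
          fun x _ _ => Finset.prod_nonneg fun i _ => hf₀ i (x i)
    _ = ∏ i, ∑ k ∈ T.image (· i), f i k := (Finset.prod_univ_sum _ _).symm
    _ ≤ ∏ i, ∑' k, f i k :=
        Finset.prod_le_prod (fun i _ => Finset.sum_nonneg fun k _ => hf₀ i k)
          fun i _ => (hf i).sum_le_tsum _ fun k _ => hf₀ i k

lemma summable_exp_neg_mul_add_sq {c : ℝ} (hc : 0 < c) (a : ℝ) :
    Summable fun n : ℤ => rexp (-c * (n + a) ^ 2) := by
  -- `(n + a)² ≥ n²/2 - a²` reduces this to the centred Gaussian bound for `jacobiTheta₂`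
  have hT : 0 < c / (2 * π) := by positivity
  refine ((summable_pow_mul_jacobiTheta₂_term_bound 0 hT 0).mul_left
    (rexp (c * a ^ 2))).of_nonneg_of_le (fun n => (Real.exp_pos _).le) fun n => ?_
  rw [pow_zero, one_mul, ← Real.exp_add, Real.exp_le_exp]
  have : -π * (c / (2 * π) * (n : ℝ) ^ 2 - 2 * 0 * |(n : ℝ)|) = -(c * n ^ 2 / 2) := by
    field_simp
    ring
  rw [Int.cast_abs, this]
  nlinarith [mul_nonneg hc.le (sq_nonneg ((n : ℝ) + 2 * a))]

lemma abs_mul_le_dotProduct_self {n : Type*} [Fintype n] (x : n → ℝ) (j k : n) :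
    |x j * x k| ≤ x ⬝ᵥ x := by
  have hsq : ∀ i, x i ^ 2 ≤ x ⬝ᵥ x := fun i => by
    rw [sq]; exact Finset.single_le_sum (fun i _ => mul_self_nonneg (x i)) (Finset.mem_univ i)
  rw [abs_mul]
  nlinarith [two_mul_le_add_sq |x j| |x k|, sq_abs (x j), sq_abs (x k), hsq j, hsq k]

lemma abs_dotProduct_mulVec_le {n : Type*} [Fintype n] (B : Matrix n n ℝ) (x : n → ℝ) :
    |x ⬝ᵥ B *ᵥ x| ≤ (∑ j, ∑ k, |B j k|) * (x ⬝ᵥ x) := by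
  have hx : x ⬝ᵥ B *ᵥ x = ∑ j, ∑ k, B j k * (x j * x k) := by
    simp only [dotProduct, mulVec, Finset.mul_sum]
    exact Finset.sum_congr rfl fun j _ => Finset.sum_congr rfl fun k _ => by ring
  rw [hx, Finset.sum_mul]
  refine (Finset.abs_sum_le_sum_abs _ _).trans <| Finset.sum_le_sum fun j _ => ?_
  rw [Finset.sum_mul]
  refine (Finset.abs_sum_le_sum_abs _ _).trans <| Finset.sum_le_sum fun k _ => ?_
  rw [abs_mul]
  exact mul_le_mul_of_nonneg_left (abs_mul_le_dotProduct_self x j k) (abs_nonneg _)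

lemma tendsto_tsum_exp_mul_of_min {ι : Type*} (Q : ι → ℝ) (a : ι → ℂ) {m y₀ : ℝ}
    (S : Finset ι) (hS : ∀ i ∈ S, Q i = m) (hlt : ∀ i ∉ S, m < Q i)
    (hsum : Summable fun i => rexp (-(y₀ * Q i)) * ‖a i‖) :
    Tendsto (fun y : ℝ => ∑' i, (rexp (-(y * (Q i - m))) : ℂ) * a i) atTop
      (𝓝 (∑ i ∈ S, a i)) := by
  classical
  have hle : ∀ i, m ≤ Q i := fun i =>
    if h : i ∈ S then (hS i h).ge else (hlt i h).le
  have hlim : ∀ i, Tendsto (fun y : ℝ => (rexp (-(y * (Q i - m))) : ℂ) * a i) atTop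
      (𝓝 (if i ∈ S then a i else 0)) := by
    intro i
    split_ifs with h
    · simp [hS i h]
    · have h0 := Real.tendsto_exp_neg_atTop_nhds_zero.comp
        (tendsto_id.atTop_mul_const (sub_pos.2 (hlt i h)))
      simpa using ((continuous_ofReal.tendsto 0).comp h0).mul_const (a i)
  have hbound : ∀ᶠ y in atTop, ∀ i, ‖(rexp (-(y * (Q i - m))) : ℂ) * a i‖ ≤
      rexp (y₀ * m) * (rexp (-(y₀ * Q i)) * ‖a i‖) := by
    filter_upwards [eventually_ge_atTop y₀] with y hy i
    rw [norm_mul, norm_real, Real.norm_of_nonneg (Real.exp_pos _).le, ← mul_assoc,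
      ← Real.exp_add]
    gcongr
    nlinarith [hle i]
  have := tendsto_tsum_of_dominated_convergence (hsum.mul_left _) hlim hbound
  rwa [tsum_eq_sum (s := S) fun i hi => if_neg hi, Finset.sum_congr rfl fun i hi => if_pos hi]
    at this

section ThetaAsymptotics

variable {g : ℕ}

def charPoint (K : Type*) [Field K] (ε N : Fin g → ℤ) : Fin g → K :=
  fun j => N j + ε j / 2

noncomputable def thetaPhase (R : Matrix (Fin g) (Fin g) ℂ) (ε δ N : Fin g → ℤ) : ℂ :=
  cexp (π * I * (charPoint ℂ ε N ⬝ᵥ R *ᵥ charPoint ℂ ε N +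
    charPoint ℂ ε N ⬝ᵥ fun j => (δ j : ℂ)))

lemma thetaPhase_ne_zero (R : Matrix (Fin g) (Fin g) ℂ) (ε δ N : Fin g → ℤ) :
    thetaPhase R ε δ N ≠ 0 :=
  Complex.exp_ne_zero _

lemma sum_sum_mul_mul_eq_dotProduct_mulVec {n R : Type*} [Fintype n] [CommSemiring R]
    (A : Matrix n n R) (w : n → R) : ∑ j, ∑ k, w j * A j k * w k = w ⬝ᵥ A *ᵥ w := by
  simp only [dotProduct, mulVec, Finset.mul_sum, mul_assoc]

lemma charPoint_complex (ε N : Fin g → ℤ) : charPoint ℂ ε N = ofReal ∘ charPoint ℝ ε N := by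
  ext j
  simp [charPoint]

lemma theta_zero_eq_tsum_thetaPhase (τ : Matrix (Fin g) (Fin g) ℂ) (ε δ : Fin g → ℤ) :
    theta g ε δ τ 0 = ∑' N, thetaPhase τ ε δ N := by
  refine tsum_congr fun N => congrArg cexp ?_
  rw [← sum_sum_mul_mul_eq_dotProduct_mulVec, mul_add]
  congr 1
  simp only [dotProduct, Pi.zero_apply, zero_add, Finset.mul_sum]
  exact Finset.sum_congr rfl fun j _ => by simp only [charPoint]; ring

lemma ofReal_dotProduct_mulVec {n : Type*} [Fintype n] (E : Matrix n n ℝ) (v : n → ℝ) :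
    ((v ⬝ᵥ E *ᵥ v : ℝ) : ℂ) = (ofReal ∘ v) ⬝ᵥ E.map ofReal *ᵥ (ofReal ∘ v) := by
  rw [show ((v ⬝ᵥ E *ᵥ v : ℝ) : ℂ) = ofRealHom (v ⬝ᵥ E *ᵥ v) from rfl, RingHom.map_dotProduct]
  congr 1
  ext j
  exact RingHom.map_mulVec ofRealHom E v j

lemma thetaPhase_smul_add (E : Matrix (Fin g) (Fin g) ℝ) (R : Matrix (Fin g) (Fin g) ℂ)
    (ε δ N : Fin g → ℤ) (y : ℝ) :
    thetaPhase ((I * (y : ℂ)) • E.map ofReal + R) ε δ N =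
      (rexp (-(π * y * (charPoint ℝ ε N ⬝ᵥ E *ᵥ charPoint ℝ ε N))) : ℂ) * thetaPhase R ε δ N := by
  rw [thetaPhase, thetaPhase, ofReal_exp, ← Complex.exp_add, add_mulVec, smul_mulVec,
    dotProduct_add, dotProduct_smul, smul_eq_mul, ofReal_neg, ofReal_mul, ofReal_mul,
    ofReal_dotProduct_mulVec, ← charPoint_complex]
  congr 1
  linear_combination
    (π * y * (charPoint ℂ ε N ⬝ᵥ E.map ofReal *ᵥ charPoint ℂ ε N)) * I_mul_I

lemma norm_thetaPhase_le (R : Matrix (Fin g) (Fin g) ℂ) (ε δ N : Fin g → ℤ) :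
    ‖thetaPhase R ε δ N‖ ≤
      rexp (π * (∑ j, ∑ k, |(R j k).im|) * (charPoint ℝ ε N ⬝ᵥ charPoint ℝ ε N)) := by
  set v := charPoint ℝ ε N
  have him : (charPoint ℂ ε N ⬝ᵥ R *ᵥ charPoint ℂ ε N +
      charPoint ℂ ε N ⬝ᵥ fun j => (δ j : ℂ)).im = v ⬝ᵥ R.map im *ᵥ v := by
    simp [charPoint_complex, v, dotProduct, mulVec, Complex.im_sum, Finset.mul_sum]
  rw [thetaPhase, norm_exp, mul_assoc, re_ofReal_mul, mul_comm I, mul_I_re, him,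
    Real.exp_le_exp, mul_assoc]
  exact mul_le_mul_of_nonneg_left ((neg_le_abs _).trans (abs_dotProduct_mulVec_le _ v))
    Real.pi_pos.le

lemma charPoint_neg_sub (K : Type*) [Field K] [CharZero K] (ε N : Fin g → ℤ) :
    charPoint K ε (-N - ε) = -charPoint K ε N := by
  ext j
  simp only [charPoint, Pi.sub_apply, Pi.neg_apply, Int.cast_sub, Int.cast_neg]
  ring

lemma thetaPhase_neg_sub (R : Matrix (Fin g) (Fin g) ℂ) {ε δ : Fin g → ℤ}
    (hεδ : Even (∑ j, ε j * δ j)) (N : Fin g → ℤ) :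
    thetaPhase R ε δ (-N - ε) = thetaPhase R ε δ N := by
  obtain ⟨r, hr⟩ := hεδ
  have hlin : (charPoint ℂ ε N ⬝ᵥ fun j => (δ j : ℂ)) = ((∑ j, N j * δ j + r : ℤ) : ℂ) := by
    have hr' : (∑ j, (ε j : ℂ) * δ j) = r + r := by exact_mod_cast hr
    simp only [charPoint, dotProduct, add_mul, Finset.sum_add_distrib, Int.cast_add,
      Int.cast_sum, Int.cast_mul]
    simp only [div_mul_eq_mul_div, ← Finset.sum_div, hr']
    ring
  rw [thetaPhase, thetaPhase, charPoint_neg_sub, neg_dotProduct, mulVec_neg, dotProduct_neg,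
    neg_neg, neg_dotProduct, hlin]
  rw [← mul_one (cexp _), ← Complex.exp_int_mul_two_pi_mul_I (∑ j, N j * δ j + r),
    ← Complex.exp_add]
  congr 1
  ring

theorem tendsto_exp_mul_theta (E : Matrix (Fin g) (Fin g) ℝ) {c : ℝ} (hc : 0 < c)
    (hE : ∀ x, c * (x ⬝ᵥ x) ≤ x ⬝ᵥ E *ᵥ x) (R : Matrix (Fin g) (Fin g) ℂ) (ε δ : Fin g → ℤ)
    {m : ℝ} (S : Finset (Fin g → ℤ))
    (hS : ∀ N ∈ S, charPoint ℝ ε N ⬝ᵥ E *ᵥ charPoint ℝ ε N = m)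
    (hlt : ∀ N ∉ S, m < charPoint ℝ ε N ⬝ᵥ E *ᵥ charPoint ℝ ε N) :
    Tendsto (fun y : ℝ => (rexp (π * m * y) : ℂ) * theta g ε δ ((I * y) • E.map ofReal + R) 0)
      atTop (𝓝 (∑ N ∈ S, thetaPhase R ε δ N)) := by
  set C := ∑ j, ∑ k, |(R j k).im|
  have hC : 0 ≤ C := by positivity
  -- at `y₀ = (C + 1) / c` the terms are dominated by the Gaussian `exp (-π |N + ε/2|²)`
  have hsum : Summable fun N => rexp (-((C + 1) / c *
      (π * (charPoint ℝ ε N ⬝ᵥ E *ᵥ charPoint ℝ ε N)))) * ‖thetaPhase R ε δ N‖ := by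
    refine (summable_pi_prod_of_nonneg (fun _ _ => (Real.exp_pos _).le) fun j =>
        summable_exp_neg_mul_add_sq Real.pi_pos ((ε j : ℝ) / 2)).of_nonneg_of_le
      (fun N => by positivity) fun N => ?_
    set v := charPoint ℝ ε N
    calc rexp (-((C + 1) / c * (π * (v ⬝ᵥ E *ᵥ v)))) * ‖thetaPhase R ε δ N‖
        ≤ rexp (-((C + 1) / c * (π * (c * (v ⬝ᵥ v))))) * rexp (π * C * (v ⬝ᵥ v)) := by
          gcongr
          · exact hE v
          · exact norm_thetaPhase_le R ε δ N
      _ = ∏ j, rexp (-π * ((N j : ℝ) + ε j / 2) ^ 2) := by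
          rw [← Real.exp_add, ← Real.exp_sum]
          congr 1
          calc _ = -π * (v ⬝ᵥ v) := by field_simp; ring
            _ = _ := by simp only [v, charPoint, dotProduct, Finset.mul_sum, sq]
  refine (tendsto_tsum_exp_mul_of_min (fun N => π * (charPoint ℝ ε N ⬝ᵥ E *ᵥ charPoint ℝ ε N))
    (thetaPhase R ε δ) S (fun N hN => by rw [hS N hN])
    (fun N hN => mul_lt_mul_of_pos_left (hlt N hN) Real.pi_pos) hsum).congr fun y => ?_
  rw [theta_zero_eq_tsum_thetaPhase, ← tsum_mul_left]
  refine tsum_congr fun N => ?_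
  rw [thetaPhase_smul_add, ← mul_assoc, ← ofReal_mul, ← Real.exp_add]
  congr 3
  ring

lemma eventually_siegelUpper (E : Matrix (Fin g) (Fin g) ℝ) (hEs : E.IsSymm) {c : ℝ}
    (hc : 0 < c) (hE : ∀ x, c * (x ⬝ᵥ x) ≤ x ⬝ᵥ E *ᵥ x) {R : Matrix (Fin g) (Fin g) ℂ}
    (hR : R.IsSymm) :
    ∀ᶠ y : ℝ in atTop, SiegelUpper g ((I * y) • E.map ofReal + R) := by
  set C := ∑ j, ∑ k, |(R j k).im|
  filter_upwards [eventually_gt_atTop (C / c)] with y hy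
  refine ⟨((hEs.map _).smul _).add hR, ?_⟩
  have him : (of fun j k => (((I * (y : ℂ)) • E.map ofReal + R) j k).im) = y • E + R.map im := by
    ext j k
    simp
  rw [him]
  refine PosDef.of_dotProduct_mulVec_pos
    (isHermitian_iff_isSymm.2 ((hEs.smul y).add (hR.map im))) fun x hx => ?_
  have hx₀ : 0 < x ⬝ᵥ x := by simpa using dotProduct_star_self_pos_iff.2 hx
  have hyc : C < y * c := (div_lt_iff₀ hc).1 hy
  have hy₀ : 0 < y := lt_of_le_of_lt (by positivity) hy
  have hB : |x ⬝ᵥ R.map im *ᵥ x| ≤ C * (x ⬝ᵥ x) := abs_dotProduct_mulVec_le (R.map im) x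
  rw [star_trivial, add_mulVec, smul_mulVec, dotProduct_add, dotProduct_smul, smul_eq_mul]
  nlinarith [mul_le_mul_of_nonneg_left (hE x) hy₀.le, neg_le_abs (x ⬝ᵥ R.map im *ᵥ x),
    mul_lt_mul_of_pos_right hyc hx₀]

end ThetaAsymptotics

def E3 : Matrix (Fin 3) (Fin 3) ℝ := !![2, -1, 0; -1, 2, 0; 0, 0, 1]

lemma EK31_eq_map : EK31 = E3.map ofReal := by
  ext i j
  fin_cases i <;> fin_cases j <;> simp [EK31, E3]

lemma E3_isSymm : E3.IsSymm := by
  ext i j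
  fin_cases i <;> fin_cases j <;> rfl

lemma dotProduct_E3 (x : Fin 3 → ℝ) :
    x ⬝ᵥ E3 *ᵥ x = 2 * x 0 ^ 2 - 2 * x 0 * x 1 + 2 * x 1 ^ 2 + x 2 ^ 2 := by
  simp [dotProduct, mulVec, Fin.sum_univ_three, E3]
  ring

lemma dotProduct_self_le_E3 (x : Fin 3 → ℝ) : 1 * (x ⬝ᵥ x) ≤ x ⬝ᵥ E3 *ᵥ x := by
  rw [dotProduct_E3]
  simp only [one_mul, dotProduct, Fin.sum_univ_three]
  nlinarith [sq_nonneg (x 0 - x 1)]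

def intVec {g : ℕ} (e : Fin g → Fin 2) : Fin g → ℤ := fun j => (e j).val

def intQuadE3 (u : Fin 3 → ℤ) : ℤ := 2 * u 0 ^ 2 - 2 * u 0 * u 1 + 2 * u 1 ^ 2 + u 2 ^ 2

lemma four_mul_E3_charPoint (ε N : Fin 3 → ℤ) :
    4 * (charPoint ℝ ε N ⬝ᵥ E3 *ᵥ charPoint ℝ ε N) = intQuadE3 (2 • N + ε) := by
  rw [dotProduct_E3]
  simp only [charPoint, intQuadE3, Pi.add_apply, Pi.smul_apply]
  push_cast [nsmul_eq_mul]
  ring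

lemma sq_le_intQuadE3 (u : Fin 3 → ℤ) (j : Fin 3) : u j ^ 2 ≤ intQuadE3 u := by
  fin_cases j <;> simp only [intQuadE3, Fin.zero_eta, Fin.mk_one, Fin.reduceFinMk] <;>
    nlinarith [sq_nonneg (u 0 - u 1), sq_nonneg (u 0), sq_nonneg (u 1), sq_nonneg (u 2)]

/-- The `N` minimising `E3` on `N + ε/2`. They come in pairs `N, -N - ε`, and there are two
distinct pairs exactly when `ε 2 = 1` and `(ε 0, ε 1) ≠ 0`. -/
def minSet (ε : Fin 3 → Fin 2) : Finset (Fin 3 → ℤ) :=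
  {0, -intVec ε, -Pi.single 2 ((ε 2).val : ℤ), Pi.single 2 ((ε 2).val : ℤ) - intVec ε}

def negUnitCube : Finset (Fin 3 → ℤ) := Fintype.piFinset fun _ => {-1, 0}

lemma minSet_subset_negUnitCube : ∀ ε, minSet ε ⊆ negUnitCube := by
  decide

lemma intQuadE3_intVec_le_three : ∀ ε : Fin 3 → Fin 2, intQuadE3 (intVec ε) ≤ 3 := by
  decide

lemma intQuadE3_minSet_of_mem_negUnitCube : ∀ ε : Fin 3 → Fin 2,
    ∀ N ∈ negUnitCube,
      (N ∈ minSet ε → intQuadE3 (2 • N + intVec ε) = intQuadE3 (intVec ε)) ∧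
      (N ∉ minSet ε → intQuadE3 (intVec ε) < intQuadE3 (2 • N + intVec ε)) := by
  decide

lemma intQuadE3_minSet (ε : Fin 3 → Fin 2) (N : Fin 3 → ℤ) :
    (N ∈ minSet ε → intQuadE3 (2 • N + intVec ε) = intQuadE3 (intVec ε)) ∧
    (N ∉ minSet ε → intQuadE3 (intVec ε) < intQuadE3 (2 • N + intVec ε)) := by
  by_cases hN : N ∈ negUnitCube
  · exact intQuadE3_minSet_of_mem_negUnitCube ε N hN
  -- off the cube some `|2 N j + ε j| ≥ 2`, so the form is at least `4`, above every minimum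
  obtain ⟨j, hj⟩ : ∃ j, N j ≠ -1 ∧ N j ≠ 0 := by
    simpa [negUnitCube, Fintype.mem_piFinset] using hN
  have hfar : 4 ≤ (2 * N j + (ε j).val) ^ 2 := by
    have : (ε j).val < 2 := (ε j).isLt
    rcases (show N j ≤ -2 ∨ 1 ≤ N j by omega) with h | h <;> nlinarith
  have := (sq_le_intQuadE3 (2 • N + intVec ε) j)
  have := intQuadE3_intVec_le_three ε
  refine ⟨fun hmem => absurd (minSet_subset_negUnitCube ε hmem) hN, fun _ => ?_⟩
  simp only [Pi.add_apply, Pi.smul_apply, intVec] at *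
  simp only [nsmul_eq_mul, Nat.cast_ofNat] at *
  omega

lemma E3_charPoint_minSet (ε : Fin 3 → Fin 2) (N : Fin 3 → ℤ) :
    (N ∈ minSet ε → charPoint ℝ (intVec ε) N ⬝ᵥ E3 *ᵥ charPoint ℝ (intVec ε) N =
      charPoint ℝ (intVec ε) 0 ⬝ᵥ E3 *ᵥ charPoint ℝ (intVec ε) 0) ∧
    (N ∉ minSet ε → charPoint ℝ (intVec ε) 0 ⬝ᵥ E3 *ᵥ charPoint ℝ (intVec ε) 0 <
      charPoint ℝ (intVec ε) N ⬝ᵥ E3 *ᵥ charPoint ℝ (intVec ε) N) := by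
  have hN := four_mul_E3_charPoint (intVec ε) N
  have h0 := four_mul_E3_charPoint (intVec ε) 0
  rw [smul_zero, zero_add] at h0
  obtain ⟨hmem, hnot⟩ := intQuadE3_minSet ε N
  refine ⟨fun h => ?_, fun h => ?_⟩
  · have := congrArg (Int.cast : ℤ → ℝ) (hmem h)
    linarith
  · have := Int.cast_lt (R := ℝ) |>.2 (hnot h)
    linarith

def evenChars : Finset ((Fin 3 → Fin 2) × (Fin 3 → Fin 2)) :=
  Finset.univ.filter fun c => (∑ j, (c.1 j).val * (c.2 j).val) % 2 = 0

lemma even_of_mem_evenChars {c : (Fin 3 → Fin 2) × (Fin 3 → Fin 2)} (hc : c ∈ evenChars) :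
    Even (∑ j, intVec c.1 j * intVec c.2 j) := by
  have h := (Finset.mem_filter.1 hc).2
  have : Even (∑ j, (c.1 j).val * (c.2 j).val) := Nat.even_iff.2 h
  simp only [intVec]
  exact_mod_cast this

lemma sum_evenChars_E3 :
    ∑ c ∈ evenChars, charPoint ℝ (intVec c.1) 0 ⬝ᵥ E3 *ᵥ charPoint ℝ (intVec c.1) 0 = 16 := by
  have h : ∑ c ∈ evenChars, intQuadE3 (intVec c.1) = 64 := by decide
  have h4 := fun c : (Fin 3 → Fin 2) × (Fin 3 → Fin 2) => four_mul_E3_charPoint (intVec c.1) 0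
  simp only [smul_zero, zero_add] at h4
  have : 4 * ∑ c ∈ evenChars, charPoint ℝ (intVec c.1) 0 ⬝ᵥ E3 *ᵥ charPoint ℝ (intVec c.1) 0 =
      64 := by
    rw [Finset.mul_sum, Finset.sum_congr rfl fun c _ => h4 c]
    exact_mod_cast h
  linarith

noncomputable def thetaLimit (R : Matrix (Fin 3) (Fin 3) ℂ)
    (c : (Fin 3 → Fin 2) × (Fin 3 → Fin 2)) : ℂ :=
  ∑ N ∈ minSet c.1, thetaPhase R (intVec c.1) (intVec c.2) N

theorem tendsto_exp_mul_thetaNull3 (R : Matrix (Fin 3) (Fin 3) ℂ) :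
    Tendsto (fun y : ℝ => (rexp (16 * π * y) : ℂ) * thetaNull3 ((I * (y : ℂ)) • EK31 + R))
      atTop (𝓝 (∏ c ∈ evenChars, thetaLimit R c)) := by
  refine (tendsto_finsetProd evenChars fun c _ =>
    tendsto_exp_mul_theta E3 one_pos dotProduct_self_le_E3 R (intVec c.1) (intVec c.2)
      (minSet c.1) (fun N => (E3_charPoint_minSet c.1 N).1)
      (fun N => (E3_charPoint_minSet c.1 N).2)).congr fun y => ?_
  rw [Finset.prod_mul_distrib, ← ofReal_prod, ← Real.exp_sum, ← Finset.sum_mul,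
    ← Finset.mul_sum, sum_evenChars_E3, EK31_eq_map, mul_comm π]
  rfl

lemma thetaPhase_zero_eq_mul {R : Matrix (Fin 3) (Fin 3) ℂ} (hR : R.IsSymm) {ε : Fin 3 → ℤ}
    (hε : ε 2 = 1) (δ : Fin 3 → ℤ) :
    thetaPhase R ε δ 0 = thetaPhase R ε δ (-Pi.single 2 1) *
      cexp (π * I * (ε 0 * R 0 2 + ε 1 * R 1 2 + δ 2)) := by
  have h20 : R 2 0 = R 0 2 := hR.apply 0 2
  have h21 : R 2 1 = R 1 2 := hR.apply 1 2
  rw [thetaPhase, thetaPhase, ← Complex.exp_add]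
  congr 1
  simp [charPoint, dotProduct, mulVec, Fin.sum_univ_three, hε]
  linear_combination (π * I * ε 0 / 2) * h20 + (π * I * ε 1 / 2) * h21

lemma minSet_eq_pair : ∀ ε : Fin 3 → Fin 2, ¬(ε 2 = 1 ∧ (ε 0 = 1 ∨ ε 1 = 1)) →
    minSet ε = {0, -intVec ε} := by
  decide

lemma minSet_nodup : ∀ ε : Fin 3 → Fin 2, ε 2 = 1 ∧ (ε 0 = 1 ∨ ε 1 = 1) →
    0 ∉ ({-intVec ε, -Pi.single 2 ((ε 2).val : ℤ), Pi.single 2 ((ε 2).val : ℤ) - intVec ε} :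
      Finset (Fin 3 → ℤ)) ∧
    -intVec ε ∉ ({-Pi.single 2 ((ε 2).val : ℤ), Pi.single 2 ((ε 2).val : ℤ) - intVec ε} :
      Finset (Fin 3 → ℤ)) ∧
    -Pi.single 2 ((ε 2).val : ℤ) ≠ Pi.single 2 ((ε 2).val : ℤ) - intVec ε := by
  decide

lemma thetaLimit_ne_zero (R : Matrix (Fin 3) (Fin 3) ℂ) {c : (Fin 3 → Fin 2) × (Fin 3 → Fin 2)}
    (hc : c ∈ evenChars) (h : ¬(c.1 2 = 1 ∧ (c.1 0 = 1 ∨ c.1 1 = 1))) : thetaLimit R c ≠ 0 := by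
  have hneg : thetaPhase R (intVec c.1) (intVec c.2) (-intVec c.1) =
      thetaPhase R (intVec c.1) (intVec c.2) 0 := by
    simpa using thetaPhase_neg_sub R (even_of_mem_evenChars hc) 0
  rw [thetaLimit, minSet_eq_pair c.1 h]
  by_cases h0 : (0 : Fin 3 → ℤ) = -intVec c.1
  · rw [← h0, Finset.pair_eq_singleton, Finset.sum_singleton]
    exact thetaPhase_ne_zero _ _ _ _
  · rw [Finset.sum_pair h0, hneg, ← two_mul]
    exact mul_ne_zero two_ne_zero (thetaPhase_ne_zero _ _ _ _)

lemma thetaLimit_eq_zero_iff {R : Matrix (Fin 3) (Fin 3) ℂ} (hR : R.IsSymm)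
    {c : (Fin 3 → Fin 2) × (Fin 3 → Fin 2)} (hc : c ∈ evenChars)
    (h : c.1 2 = 1 ∧ (c.1 0 = 1 ∨ c.1 1 = 1)) :
    thetaLimit R c = 0 ↔
      cexp (π * I * ((c.1 0).val * R 0 2 + (c.1 1).val * R 1 2 + (c.2 2).val)) = -1 := by
  obtain ⟨h₁, h₂, h₃⟩ := minSet_nodup c.1 h
  have heven := even_of_mem_evenChars hc
  have hpair₀ := thetaPhase_neg_sub R heven 0
  have hpair₁ := thetaPhase_neg_sub R heven (-Pi.single 2 1)
  rw [neg_zero, zero_sub] at hpair₀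
  rw [neg_neg] at hpair₁
  have hsingle : (Pi.single 2 ((c.1 2).val : ℤ) : Fin 3 → ℤ) = Pi.single 2 1 := by
    rw [h.1]
    rfl
  rw [thetaLimit, minSet, Finset.sum_insert h₁, Finset.sum_insert h₂, Finset.sum_pair h₃,
    hsingle, hpair₀, hpair₁, thetaPhase_zero_eq_mul hR (by simp [intVec, h.1])]
  simp only [intVec, Int.cast_natCast]
  set e := cexp (π * I * ((c.1 0).val * R 0 2 + (c.1 1).val * R 1 2 + (c.2 2).val))
  set p := thetaPhase R (intVec c.1) (intVec c.2) (-Pi.single 2 1)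
  constructor
  · intro hL
    have : p * (2 * (e + 1)) = 0 := by linear_combination hL
    have := (mul_eq_zero.1 this).resolve_left (thetaPhase_ne_zero _ _ _ _)
    linear_combination (mul_eq_zero.1 this).resolve_left two_ne_zero
  · intro hL
    rw [hL]
    ring

lemma exp_two_pi_I_mul_eq_one_iff (z : ℂ) :
    cexp (2 * π * I * z) = 1 ↔ ∃ d : Fin 2, cexp (π * I * (z + d.val)) = -1 := by
  have hsq : cexp (2 * π * I * z) = cexp (π * I * z) ^ 2 := by
    rw [← Complex.exp_nat_mul]
    ring_nf
  have hshift : cexp (π * I * (z + 1)) = -cexp (π * I * z) := by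
    rw [mul_add, mul_one, Complex.exp_add, Complex.exp_pi_mul_I]
    ring
  constructor
  · intro h
    have : (cexp (π * I * z) - 1) * (cexp (π * I * z) + 1) = 0 := by
      linear_combination h - hsq
    rcases mul_eq_zero.1 this with h1 | h1
    · exact ⟨1, by simp [hshift, sub_eq_zero.1 h1]⟩
    · exact ⟨0, by simpa using eq_neg_of_add_eq_zero_left h1⟩
  · rintro ⟨d, hd⟩
    rcases Fin.exists_fin_two.1 ⟨d, rfl⟩ with rfl | rfl
    · simp only [Fin.val_zero, CharP.cast_eq_zero, add_zero] at hd
      rw [hsq, hd]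
      norm_num
    · simp only [Fin.val_one, Nat.cast_one, hshift, neg_inj] at hd
      rw [hsq, hd]
      norm_num

lemma exists_mem_evenChars : ∀ (ε : Fin 3 → Fin 2) (d : Fin 2), ε 2 = 1 ∧ (ε 0 = 1 ∨ ε 1 = 1) →
    ∃ δ, (ε, δ) ∈ evenChars ∧ δ 2 = d := by
  decide

lemma two_eq_one_and_or_iff : ∀ ε : Fin 3 → Fin 2, ε 2 = 1 ∧ (ε 0 = 1 ∨ ε 1 = 1) ↔
    ε = ![1, 0, 1] ∨ ε = ![0, 1, 1] ∨ ε = ![1, 1, 1] := by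
  decide

lemma prod_thetaLimit_eq_zero_iff {R : Matrix (Fin 3) (Fin 3) ℂ} (hR : R.IsSymm) :
    ∏ c ∈ evenChars, thetaLimit R c = 0 ↔
      (cexp (2 * π * I * R 0 2) - 1) * (cexp (2 * π * I * R 1 2) - 1) *
        (cexp (2 * π * I * R 0 2) * cexp (2 * π * I * R 1 2) - 1) = 0 := by
  have key : ∏ c ∈ evenChars, thetaLimit R c = 0 ↔ ∃ ε : Fin 3 → Fin 2,
      (ε 2 = 1 ∧ (ε 0 = 1 ∨ ε 1 = 1)) ∧
        cexp (2 * π * I * ((ε 0).val * R 0 2 + (ε 1).val * R 1 2)) = 1 := by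
    rw [Finset.prod_eq_zero_iff]
    constructor
    · rintro ⟨c, hc, hL⟩
      by_cases h : c.1 2 = 1 ∧ (c.1 0 = 1 ∨ c.1 1 = 1)
      · exact ⟨c.1, h, (exp_two_pi_I_mul_eq_one_iff _).2
          ⟨c.2 2, by simpa [add_assoc] using (thetaLimit_eq_zero_iff hR hc h).1 hL⟩⟩
      · exact absurd hL (thetaLimit_ne_zero R hc h)
    · rintro ⟨ε, h, hexp⟩
      obtain ⟨d, hd⟩ := (exp_two_pi_I_mul_eq_one_iff _).1 hexp
      obtain ⟨δ, hδ, rfl⟩ := exists_mem_evenChars ε d h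
      exact ⟨(ε, δ), hδ, (thetaLimit_eq_zero_iff hR hδ h).2 (by simpa [add_assoc] using hd)⟩
  rw [key]
  simp only [two_eq_one_and_or_iff, or_and_right, exists_or, exists_eq_left]
  simp [mul_add, Complex.exp_add, sub_eq_zero, or_assoc]

/-- Lowest order behavior of the theta-null along the cone `σ_{K₃+1}`. -/
theorem stmt_9 (R : Matrix (Fin 3) (Fin 3) ℂ) (hR : R.IsSymm) :
    (∀ᶠ y : ℝ in Filter.atTop, SiegelUpper 3 ((I * (y : ℂ)) • EK31 + R)) ∧
    ∃ L : ℂ,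
      Filter.Tendsto
        (fun y : ℝ => (Real.exp (16 * Real.pi * y) : ℂ) *
          thetaNull3 ((I * (y : ℂ)) • EK31 + R))
        Filter.atTop (nhds L) ∧
      (L = 0 ↔
        (Complex.exp (2 * ↑Real.pi * I * R 0 2) - 1) *
          (Complex.exp (2 * ↑Real.pi * I * R 1 2) - 1) *
          (Complex.exp (2 * ↑Real.pi * I * R 0 2) *
            Complex.exp (2 * ↑Real.pi * I * R 1 2) - 1) = 0) := by
  refine ⟨?_, _, tendsto_exp_mul_thetaNull3 R, prod_thetaLimit_eq_zero_iff hR⟩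
  rw [EK31_eq_map]
  exact eventually_siegelUpper E3 E3_isSymm one_pos dotProduct_self_le_E3 hR
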